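/- (Δ-operation soundness) Let G be a finite graph with model E₃^T and let x, y, z form a triangle. Condition on the coloring pattern of the triangle: (A₁) xy differs in color from xz and yz; (A₂) xz differs from xy and yz; (A₃) yz differs from xy and xz; (A₄) all three edges have the same color. In case Aᵢ (i = 1,2,3) the connection probabilities P(u₀ → v_j) in G equal those in the graph obtained by contracting the 'odd' edge and deleting one of the resulting parallel edges; in case A₄ they equal those of the hypergraph model where the three triangle edges are constrained to share one uniformly random color. Consequently P_G(u₀→v_j) = (1/4)[P_{G₁}(u₀→v_j) + P_{G₂}(u₀→v_j) + P_{G₃}(u₀→v_j) + P_{G₄}(u₀→v_j)]. -/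

import Mathlib

/-!
Let `o = pq` be the triangle edge whose color differs from the other two, `d = pw` and
`r = qw`. In every color layer `p` and `q` are then joined, directly by `o` or through `w` by
`d` and `r`, so identifying `p` with `q` does not change connectivity; after the contraction
`d` becomes a parallel copy of `r` with the same color and can be deleted. Conditioning on the
pattern fixes the colors of `o` and `d` in terms of that of `r` and leaves all other edges
uniform, so each of the four patterns has probability `1/4`, and under the monochromatic
pattern the coloring is exactly that of the block model `E₄`.
-/

open scoped Classical

noncomputable section

/-- Indicator of a proposition, as a real number. -/
def pInd (P : Prop) : ℝ := if P then 1 else 0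

/-- A finite multigraph without loops on vertex set `V`. -/
structure Multigraph (V : Type) where
  E : Type
  fintypeE : Fintype E
  decEqE : DecidableEq E
  ends : E → Sym2 V
  not_isDiag : ∀ e, ¬ (ends e).IsDiag

attribute [instance] Multigraph.fintypeE Multigraph.decEqE

variable {V : Type}

/-- Colored presence graph of model E₃ on a multigraph: the copy of edge `e` lives in
the layer given by its color `c e`; vertical edges at `T`. -/
def Multigraph.ccGraph (M : Multigraph V) (c : M.E → Bool) (T : Set V) :
    SimpleGraph (V × Bool) where
  Adj a b := (a.2 = b.2 ∧ ∃ e, M.ends e = s(a.1, b.1) ∧ c e = a.2) ∨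
    (a.1 = b.1 ∧ a.2 ≠ b.2 ∧ a.1 ∈ T)
  symm := by
    constructor
    intro a b h
    rcases h with ⟨h1, e, he, hc⟩ | ⟨h1, h2, h3⟩
    · exact Or.inl ⟨h1.symm, e, by rwa [Sym2.eq_swap], by rwa [← h1]⟩
    · exact Or.inr ⟨h1.symm, Ne.symm h2, h1 ▸ h3⟩
  loopless := by
    constructor
    rintro a (⟨h1, e, he, hc⟩ | ⟨h1, h2, h3⟩)
    · exact M.not_isDiag e (by rw [he]; exact Sym2.mk_isDiag_iff.mpr rfl)
    · exact h2 rfl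

/-- Connection probability in model E₃^T on a multigraph. -/
def PE3M (M : Multigraph V) (T : Set V) (x y : V × Bool) : ℝ :=
  (∑ c : M.E → Bool, pInd ((M.ccGraph c T).Reachable x y)) / 2 ^ Fintype.card M.E

/-- Restriction of a multigraph to the edges satisfying `P` (edge deletion). -/
def Multigraph.restrict (M : Multigraph V) (P : M.E → Prop) : Multigraph V where
  E := {e : M.E // P e}
  fintypeE := Subtype.fintype _
  decEqE := inferInstance
  ends e := M.ends e.1
  not_isDiag e := M.not_isDiag e.1

/-- Contraction of the vertex `x` into the vertex `y`: every edge endpoint equal to `x`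
is renamed `y`, and the edges that become loops are removed. -/
def Multigraph.contract [DecidableEq V] (M : Multigraph V) (x y : V) : Multigraph V where
  E := {e : M.E // ¬ (Sym2.map (fun w => if w = x then y else w) (M.ends e)).IsDiag}
  fintypeE := Subtype.fintype _
  decEqE := inferInstance
  ends e := Sym2.map (fun w => if w = x then y else w) (M.ends e.1)
  not_isDiag e := e.2


/-- The coloring of the edges of `M` in which the three edges `e₁, e₂, e₃` of a
triangle are constrained to share one common color (model E₄ with the block
`{e₁,e₂,e₃}` and singletons elsewhere). -/
def triColor (M : Multigraph V) (e₁ e₂ e₃ : M.E)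
    (γ : ({e : M.E // e ≠ e₁ ∧ e ≠ e₂ ∧ e ≠ e₃} ⊕ Unit) → Bool) : M.E → Bool :=
  fun e =>
    if h : e = e₁ ∨ e = e₂ ∨ e = e₃ then γ (Sum.inr ())
    else γ (Sum.inl ⟨e, by push_neg at h; exact h⟩)

/-- Connection probability in the hypergraph model E₄ where the triangle edges
`e₁, e₂, e₃` form a single block (one uniform color) and all other edges are
independently uniformly colored. -/
def PE4tri (M : Multigraph V) (e₁ e₂ e₃ : M.E) (T : Set V) (x y : V × Bool) : ℝ :=
  (∑ γ : ({e : M.E // e ≠ e₁ ∧ e ≠ e₂ ∧ e ≠ e₃} ⊕ Unit) → Bool,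
      pInd ((M.ccGraph (triColor M e₁ e₂ e₃ γ) T).Reachable x y)) /
    2 ^ Fintype.card (({e : M.E // e ≠ e₁ ∧ e ≠ e₂ ∧ e ≠ e₃} ⊕ Unit))

theorem SimpleGraph.reachable_iff_of_adj_reachable {α : Type*} {G H : SimpleGraph α} (φ : α → α)
    (hφ : ∀ a, G.Reachable a (φ a)) (hGH : ∀ a b, G.Adj a b → H.Reachable (φ a) (φ b))
    (hHG : ∀ a b, H.Adj a b → G.Reachable a b) {a b : α} :
    G.Reachable a b ↔ H.Reachable (φ a) (φ b) := by
  have hHG' : ∀ a b, H.Reachable a b → G.Reachable a b := by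
    simp only [SimpleGraph.reachable_iff_reflTransGen] at hHG ⊢
    exact Relation.reflTransGen_closed hHG
  refine ⟨fun h => ?_, fun h => (hφ a).trans ((hHG' _ _ h).trans (hφ b).symm)⟩
  simp only [SimpleGraph.reachable_iff_reflTransGen] at h hGH ⊢
  exact Relation.ReflTransGen.lift' φ hGH _ _ h

theorem Fintype.card_subtype_ne_and_ne_add_two {α : Type*} [Fintype α] [DecidableEq α] {a b : α}
    (hab : a ≠ b) : Fintype.card {x // x ≠ a ∧ x ≠ b} + 2 = Fintype.card α := by
  rw [Fintype.card_subtype, ← Finset.card_compl_add_card {a, b}, Finset.card_pair hab]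
  congr 2; ext; simp

theorem Fintype.card_subtype_ne_and_ne_and_ne_add_three {α : Type*} [Fintype α] [DecidableEq α]
    {a b c : α} (hab : a ≠ b) (hac : a ≠ c) (hbc : b ≠ c) :
    Fintype.card {x // x ≠ a ∧ x ≠ b ∧ x ≠ c} + 3 = Fintype.card α := by
  rw [Fintype.card_subtype, ← Finset.card_compl_add_card {a, b, c},
    Finset.card_eq_three.2 ⟨a, b, c, hab, hac, hbc, rfl⟩]
  congr 2; ext; simp

theorem Fintype.sum_ite_eq_sum_comp {α β R : Type*} [Fintype α] [Fintype β] [AddCommMonoid R]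
    (Q : β → Prop) [DecidablePred Q] (j : α → β) (π : β → α) (hj : ∀ a, Q (j a))
    (hπj : ∀ a, π (j a) = a) (hjπ : ∀ b, Q b → j (π b) = b) (g : β → R) :
    ∑ b, (if Q b then g b else 0) = ∑ a, g (j a) := by
  rw [← Finset.sum_filter]
  refine Finset.sum_nbij' π j (by simp) (by simpa using hj) (fun b hb => hjπ b (by simpa using hb))
    (fun a _ => hπj a) (fun b hb => by rw [hjπ b (by simpa using hb)])

theorem sum_comp_div_two_pow_card {α β : Type*} [Fintype α] [Fintype β] [DecidableEq α]
    [DecidableEq β] {ι : α → β} (hι : Function.Injective ι) (F : (α → Bool) → ℝ) :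
    (∑ c : β → Bool, F (c ∘ ι)) / 2 ^ Fintype.card β =
      (∑ g : α → Bool, F g) / 2 ^ Fintype.card α := by
  set e := Equiv.ofInjective ι hι
  have hrange : ∑ g : Set.range ι → Bool, F (g ∘ e) = ∑ g, F g :=
    Fintype.sum_equiv (e.symm.arrowCongr (Equiv.refl Bool)) _ F (fun _ => rfl)
  have hsum : ∑ c : β → Bool, F (c ∘ ι) =
      2 ^ Fintype.card {b // b ∉ Set.range ι} * ∑ g : α → Bool, F g := by
    rw [Fintype.sum_equiv (Equiv.piEquivPiSubtypeProd (· ∈ Set.range ι) fun _ => Bool)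
      (fun c => F (c ∘ ι)) (fun x => F (x.1 ∘ e)) (fun _ => rfl), Fintype.sum_prod_type_right]
    simp only [hrange, Finset.sum_const, Finset.card_univ, Fintype.card_fun, Fintype.card_bool,
      nsmul_eq_mul, Nat.cast_pow, Nat.cast_ofNat]
  have hcard : Fintype.card {b // b ∉ Set.range ι} + Fintype.card α = Fintype.card β := by
    rw [Fintype.card_subtype_compl, Set.card_range_of_injective hι]
    exact Nat.sub_add_cancel (Fintype.card_le_of_injective ι hι)
  rw [hsum, ← hcard, pow_add, mul_div_mul_left _ _ (by positivity)]

theorem sum_ite_ne_and_eq_comp_div_two_pow {α β : Type*} [Fintype α] [Fintype β]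
    [DecidableEq α] [DecidableEq β] {o d r : β} (hod : o ≠ d) (hro : r ≠ o) (hrd : r ≠ d)
    {ι : α → β} (hι : Function.Injective ι) (hιo : ∀ a, ι a ≠ o) (hιd : ∀ a, ι a ≠ d) (F : (α → Bool) → ℝ) :
    (∑ c : β → Bool, if c o ≠ c d ∧ c d = c r then F (c ∘ ι) else 0) /
        2 ^ (Fintype.card β - 2) = (∑ g : α → Bool, F g) / 2 ^ Fintype.card α := by
  -- a coloring with `c o ≠ c d = c r` is determined by its values off `{o, d}`
  let extend : ({e // e ≠ o ∧ e ≠ d} → Bool) → β → Bool := fun c' e =>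
    if h₁ : e = o then !c' ⟨r, hro, hrd⟩
    else if h₂ : e = d then c' ⟨r, hro, hrd⟩ else c' ⟨e, h₁, h₂⟩
  have hsum := Fintype.sum_ite_eq_sum_comp (fun c => c o ≠ c d ∧ c d = c r) extend
    (fun c e => c e.1)
    (fun c' => by simp [extend, hod.symm, hro, hrd])
    (fun c' => funext fun ⟨e, h₁, h₂⟩ => by simp [extend, h₁, h₂])
    (fun c ⟨hod', hdr⟩ => funext fun e => by
      by_cases h₁ : e = o
      · subst h₁; simpa [extend, ← hdr] using Bool.eq_not.2 hod'.symm
      · by_cases h₂ : e = d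
        · subst h₂; simp [extend, h₁, hdr]
        · simp [extend, h₁, h₂])
    (fun c => F (c ∘ ι))
  have hcomp : ∀ c', extend c' ∘ ι = c' ∘ fun a => ⟨ι a, hιo a, hιd a⟩ :=
    fun c' => funext fun a => by simp [extend, hιo a, hιd a]
  rw [hsum, ← Fintype.card_subtype_ne_and_ne_add_two hod, Nat.add_sub_cancel]
  simp only [hcomp]
  exact sum_comp_div_two_pow_card (ι := fun a => (⟨ι a, hιo a, hιd a⟩ : {e // e ≠ o ∧ e ≠ d}))
    (fun a b h => hι (congrArg Subtype.val h)) F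

theorem sum_eq_add_sum_ite_patterns {β : Type*} [Fintype β] [DecidableEq β] (e₁ e₂ e₃ : β)
    (g : (β → Bool) → ℝ) :
    ∑ c : β → Bool, g c =
      (∑ c : β → Bool, if c e₁ ≠ c e₂ ∧ c e₂ = c e₃ then g c else 0) +
      (∑ c : β → Bool, if c e₂ ≠ c e₁ ∧ c e₁ = c e₃ then g c else 0) +
      (∑ c : β → Bool, if c e₃ ≠ c e₁ ∧ c e₁ = c e₂ then g c else 0) +
      (∑ c : β → Bool, if c e₁ = c e₂ ∧ c e₂ = c e₃ then g c else 0) := by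
  simp only [← Finset.sum_add_distrib]
  refine Finset.sum_congr rfl fun c _ => ?_
  cases c e₁ <;> cases c e₂ <;> cases c e₃ <;> simp

namespace Multigraph

variable (M : Multigraph V) {T : Set V} {c : M.E → Bool}

theorem ccGraph_adj_of_ends {e : M.E} {s t : V} (he : M.ends e = s(s, t)) :
    (M.ccGraph c T).Adj (s, c e) (t, c e) :=
  Or.inl ⟨rfl, e, he, rfl⟩

theorem ccGraph_adj_of_mem {s : V} (hs : s ∈ T) {i k : Bool} (hik : i ≠ k) :
    (M.ccGraph c T).Adj (s, i) (s, k) :=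
  Or.inr ⟨rfl, hik, hs⟩

theorem ccGraph_restrict_eq {P : M.E → Prop}
    (hP : ∀ e, ¬ P e → ∃ e', P e' ∧ M.ends e' = M.ends e ∧ c e' = c e) :
    (M.restrict P).ccGraph (fun e => c e.1) T = M.ccGraph c T := by
  ext a b
  refine or_congr_left (and_congr_right fun _ =>
    ⟨fun ⟨e, he, hc⟩ => ⟨e.1, he, hc⟩, fun ⟨e, he, hc⟩ => ?_⟩)
  by_cases h : P e
  · exact ⟨⟨e, h⟩, he, hc⟩
  · obtain ⟨e', hPe', hends, hce⟩ := hP e h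
    exact ⟨⟨e', hPe'⟩, hends.trans he, hce.trans hc⟩

theorem reachable_iff_contract [DecidableEq V] {p q : V}
    (hpq : ∀ i, (M.ccGraph c T).Reachable (p, i) (q, i)) {a b : V × Bool} :
    (M.ccGraph c T).Reachable a b ↔
      ((M.contract p q).ccGraph (fun e => c e.1)
        ((fun w => if w = p then q else w) '' T)).Reachable
        ((fun w => if w = p then q else w) a.1, a.2)
        ((fun w => if w = p then q else w) b.1, b.2) := by
  set f : V → V := fun w => if w = p then q else w
  have hf : ∀ s i, (M.ccGraph c T).Reachable (s, i) (f s, i) := by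
    intro s i
    by_cases hs : s = p
    · simpa [f, hs] using hpq i
    · simp [f, hs]
  have hf' : ∀ s t i k, (M.ccGraph c T).Reachable (s, i) (t, k) →
      (M.ccGraph c T).Reachable (f s, i) (f t, k) :=
    fun s t i k h => (hf s i).symm.trans (h.trans (hf t k))
  refine SimpleGraph.reachable_iff_of_adj_reachable (fun a => (f a.1, a.2))
    (fun a => hf a.1 a.2) ?_ ?_
  · rintro ⟨s, i⟩ ⟨t, k⟩ (⟨rfl : i = k, e, he, rfl⟩ | ⟨rfl : s = t, hik, hs⟩)
    · by_cases hloop : (Sym2.map f (M.ends e)).IsDiag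
      · rw [he, Sym2.map_mk, Sym2.mk_isDiag_iff] at hloop
        simp [hloop]
      · exact (ccGraph_adj_of_ends (M.contract p q) (e := ⟨e, hloop⟩)
          (show Sym2.map f (M.ends e) = _ by rw [he, Sym2.map_mk])).reachable
    · exact (ccGraph_adj_of_mem _ (Set.mem_image_of_mem f hs) hik).reachable
  · rintro ⟨s, i⟩ ⟨t, k⟩ (⟨rfl : i = k, e, he, rfl⟩ | ⟨rfl : s = t, hik, s₀, hs₀, rfl⟩)
    · obtain ⟨⟨s₀, t₀⟩, h₀⟩ := Sym2.mk_surjective (M.ends e.1)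
      change s(s₀, t₀) = _ at h₀
      change Sym2.map f (M.ends e.1) = s(s, t) at he
      have hadj := (ccGraph_adj_of_ends M (c := c) (T := T) h₀.symm).reachable
      rw [← h₀, Sym2.map_mk, Sym2.eq_iff] at he
      rcases he with ⟨rfl, rfl⟩ | ⟨rfl, rfl⟩
      · exact hf' _ _ _ _ hadj
      · exact hf' _ _ _ _ hadj.symm
    · exact hf' _ _ _ _ (ccGraph_adj_of_mem M hs₀ hik).reachable

theorem reachable_of_triangle {p q w : V} {o d r : M.E} (ho : M.ends o = s(p, q))
    (hd : M.ends d = s(p, w)) (hr : M.ends r = s(q, w)) (hod : c o ≠ c d) (hdr : c d = c r)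
    (i : Bool) : (M.ccGraph c T).Reachable (p, i) (q, i) := by
  obtain rfl | rfl : i = c o ∨ i = c d := by
    revert hod; cases i <;> cases c o <;> cases c d <;> simp
  · exact (ccGraph_adj_of_ends M ho).reachable
  · have hadj := ccGraph_adj_of_ends M (c := c) (T := T) hd
    rw [hdr] at hadj ⊢
    exact hadj.reachable.trans (ccGraph_adj_of_ends M (hr.trans Sym2.eq_swap)).reachable

theorem reachable_iff_contract_restrict [DecidableEq V] {p q w : V} (hpw : p ≠ w) (hqw : q ≠ w)
    {o d r : M.E} (hrd : r ≠ d) (ho : M.ends o = s(p, q)) (hd : M.ends d = s(p, w))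
    (hr : M.ends r = s(q, w)) (hod : c o ≠ c d) (hdr : c d = c r) {a b : V × Bool} :
    (M.ccGraph c T).Reachable a b ↔
      (((M.contract p q).restrict (fun e => e.1 ≠ d)).ccGraph (fun e => c e.1.1)
        ((fun w => if w = p then q else w) '' T)).Reachable
        ((fun w => if w = p then q else w) a.1, a.2)
        ((fun w => if w = p then q else w) b.1, b.2) := by
  rw [ccGraph_restrict_eq (M.contract p q) (c := fun e => c e.1)]
  · exact M.reachable_iff_contract (M.reachable_of_triangle ho hd hr hod hdr)
  · intro e he
    have hloop : ¬ (Sym2.map (fun w => if w = p then q else w) (M.ends r)).IsDiag := by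
      simp [hr, Sym2.map_mk, hpw.symm, hqw]
    refine ⟨⟨r, hloop⟩, hrd, ?_, by simp [not_not.1 he, hdr]⟩
    show Sym2.map _ (M.ends r) = Sym2.map _ (M.ends e.1)
    simp [not_not.1 he, hr, hd, hpw.symm]

theorem sum_ite_div_eq_PE3M_contract [DecidableEq V] {p q w : V} (hpw : p ≠ w) (hqw : q ≠ w)
    {o d r : M.E} (hod : o ≠ d) (hro : r ≠ o) (hrd : r ≠ d) (ho : M.ends o = s(p, q))
    (hd : M.ends d = s(p, w)) (hr : M.ends r = s(q, w)) (a b : V × Bool) :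
    (∑ c : M.E → Bool, if c o ≠ c d ∧ c d = c r then
        pInd ((M.ccGraph c T).Reachable a b) else 0) / 2 ^ (Fintype.card M.E - 2) =
      PE3M ((M.contract p q).restrict (fun e => e.1 ≠ d))
        ((fun w => if w = p then q else w) '' T)
        ((fun w => if w = p then q else w) a.1, a.2)
        ((fun w => if w = p then q else w) b.1, b.2) := by
  set f : V → V := fun w => if w = p then q else w
  set M' := (M.contract p q).restrict (fun e => e.1 ≠ d)
  let ι : M'.E → M.E := fun e => e.1.1
  have hιo : ∀ e, ι e ≠ o := fun e he => e.1.2 (by rw [show e.1.1 = o from he, ho]; simp)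
  rw [Finset.sum_congr rfl fun c _ => ite_congr rfl (fun h => by
    rw [M.reachable_iff_contract_restrict hpw hqw hrd ho hd hr h.1 h.2]) fun _ => rfl]
  exact sum_ite_ne_and_eq_comp_div_two_pow hod hro hrd (ι := ι)
    (fun e e' h => Subtype.ext (Subtype.ext h)) hιo (fun e => e.2)
    (fun c' => pInd ((M'.ccGraph c' (f '' T)).Reachable (f a.1, a.2) (f b.1, b.2)))

theorem sum_ite_div_eq_PE4tri {e₁ e₂ e₃ : M.E} (h12 : e₁ ≠ e₂) (h13 : e₁ ≠ e₃) (h23 : e₂ ≠ e₃)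
    (a b : V × Bool) :
    (∑ c : M.E → Bool, if c e₁ = c e₂ ∧ c e₂ = c e₃ then
        pInd ((M.ccGraph c T).Reachable a b) else 0) / 2 ^ (Fintype.card M.E - 2) =
      PE4tri M e₁ e₂ e₃ T a b := by
  have hcard : Fintype.card ({e : M.E // e ≠ e₁ ∧ e ≠ e₂ ∧ e ≠ e₃} ⊕ Unit) =
      Fintype.card M.E - 2 := by
    have := Fintype.card_subtype_ne_and_ne_and_ne_add_three h12 h13 h23
    rw [Fintype.card_sum, Fintype.card_unit]
    omega
  rw [PE4tri, hcard, Fintype.sum_ite_eq_sum_comp (fun c => c e₁ = c e₂ ∧ c e₂ = c e₃)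
    (triColor M e₁ e₂ e₃) (fun c => Sum.elim (fun e => c e.1) fun _ => c e₁)]
  · intro γ
    simp [triColor]
  · intro γ
    funext s
    rcases s with ⟨e, h₁, h₂, h₃⟩ | ⟨⟩ <;> simp [triColor, *]
  · rintro c ⟨h₁₂, h₂₃⟩
    funext e
    by_cases he : e = e₁ ∨ e = e₂ ∨ e = e₃
    · rcases he with rfl | rfl | rfl <;> simp [triColor, *]
    · simp only [triColor, dif_neg he, Sum.elim_inl]

end Multigraph

/-- Δ-operation: for a triangle on `x, y, z` with edges `e₁ = xy`, `e₂ = xz`,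
`e₃ = yz`, conditioning on which of the four color patterns occurs reduces the E₃
connection probabilities of `G` to those of the contractions `G₁ = G/xy`,
`G₂ = G/xz`, `G₃ = G/yz` (each with one of the resulting parallel edges removed) and
of the hypergraph model `G₄` where the three triangle edges share one uniform color;
in particular `P_G = (P_{G₁} + P_{G₂} + P_{G₃} + P_{G₄})/4`. -/
theorem PE3M_triangle_operation [DecidableEq V] (M : Multigraph V) (T : Set V)
    (x y z : V) (hxy : x ≠ y) (hxz : x ≠ z) (hyz : y ≠ z)
    (e₁ e₂ e₃ : M.E) (h12 : e₁ ≠ e₂) (h13 : e₁ ≠ e₃) (h23 : e₂ ≠ e₃)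
    (hends₁ : M.ends e₁ = s(x, y)) (hends₂ : M.ends e₂ = s(x, z))
    (hends₃ : M.ends e₃ = s(y, z))
    (u v : V) (j : Bool) :
    ((∑ c : M.E → Bool,
        if c e₁ ≠ c e₂ ∧ c e₂ = c e₃ then
          pInd ((M.ccGraph c T).Reachable (u, false) (v, j)) else 0) /
      2 ^ (Fintype.card M.E - 2) =
      PE3M ((M.contract x y).restrict (fun e => e.1 ≠ e₂))
        ((fun w => if w = x then y else w) '' T)
        ((fun w => if w = x then y else w) u, false)
        ((fun w => if w = x then y else w) v, j)) ∧
    ((∑ c : M.E → Bool,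
        if c e₂ ≠ c e₁ ∧ c e₁ = c e₃ then
          pInd ((M.ccGraph c T).Reachable (u, false) (v, j)) else 0) /
      2 ^ (Fintype.card M.E - 2) =
      PE3M ((M.contract x z).restrict (fun e => e.1 ≠ e₁))
        ((fun w => if w = x then z else w) '' T)
        ((fun w => if w = x then z else w) u, false)
        ((fun w => if w = x then z else w) v, j)) ∧
    ((∑ c : M.E → Bool,
        if c e₃ ≠ c e₁ ∧ c e₁ = c e₂ then
          pInd ((M.ccGraph c T).Reachable (u, false) (v, j)) else 0) /
      2 ^ (Fintype.card M.E - 2) =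
      PE3M ((M.contract y z).restrict (fun e => e.1 ≠ e₁))
        ((fun w => if w = y then z else w) '' T)
        ((fun w => if w = y then z else w) u, false)
        ((fun w => if w = y then z else w) v, j)) ∧
    ((∑ c : M.E → Bool,
        if c e₁ = c e₂ ∧ c e₂ = c e₃ then
          pInd ((M.ccGraph c T).Reachable (u, false) (v, j)) else 0) /
      2 ^ (Fintype.card M.E - 2) =
      PE4tri M e₁ e₂ e₃ T (u, false) (v, j)) ∧
    (PE3M M T (u, false) (v, j) =
      (PE3M ((M.contract x y).restrict (fun e => e.1 ≠ e₂))
          ((fun w => if w = x then y else w) '' T)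
          ((fun w => if w = x then y else w) u, false)
          ((fun w => if w = x then y else w) v, j) +
        PE3M ((M.contract x z).restrict (fun e => e.1 ≠ e₁))
          ((fun w => if w = x then z else w) '' T)
          ((fun w => if w = x then z else w) u, false)
          ((fun w => if w = x then z else w) v, j) +
        PE3M ((M.contract y z).restrict (fun e => e.1 ≠ e₁))
          ((fun w => if w = y then z else w) '' T)
          ((fun w => if w = y then z else w) u, false)
          ((fun w => if w = y then z else w) v, j) +
        PE4tri M e₁ e₂ e₃ T (u, false) (v, j)) / 4) := by
  have P₁ := M.sum_ite_div_eq_PE3M_contract (T := T) hxz hyz h12 h13.symm h23.symm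
    hends₁ hends₂ hends₃ (u, false) (v, j)
  have P₂ := M.sum_ite_div_eq_PE3M_contract (T := T) hxy hyz.symm h12.symm h23.symm h13.symm
    hends₂ hends₁ (hends₃.trans Sym2.eq_swap) (u, false) (v, j)
  have P₃ := M.sum_ite_div_eq_PE3M_contract (T := T) hxy.symm hxz.symm h13.symm h23 h12.symm
    hends₃ (hends₁.trans Sym2.eq_swap) (hends₂.trans Sym2.eq_swap) (u, false) (v, j)
  have P₄ := M.sum_ite_div_eq_PE4tri (T := T) h12 h13 h23 (u, false) (v, j)
  refine ⟨P₁, P₂, P₃, P₄, ?_⟩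
  have hpow : (2 : ℝ) ^ (Fintype.card M.E - 2) * 4 = 2 ^ Fintype.card M.E := by
    rw [← pow_sub_mul_pow 2 (Fintype.one_lt_card_iff.2 ⟨e₁, e₂, h12⟩)]
    norm_num
  rw [← P₁, ← P₂, ← P₃, ← P₄, ← add_div, ← add_div, ← add_div, div_div,
    hpow, ← sum_eq_add_sum_ite_patterns, PE3M]

end
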